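/- arXiv:2407.06652 — 2 statements merged into one kernel-verified Lean document; each statement's English description precedes it below -/
import Mathlib

section
/- Let k ≥ 3 and let n be a positive integer with gcd(n, 2) = 1. Then the strong domination number of the proper enhanced power graph of G = Z_n × Q_{2^k} satisfies γ^strong(G_E**(Z_n × Q_{2^k})) = 2^{k-1} + 2. -/
open SimpleGraph

/-- The enhanced power graph of a group `G`: distinct `x, y` are adjacent iff
both lie in a common cyclic subgroup `⟨w⟩`. -/
def enhancedPowerGraph (G : Type*) [Group G] : SimpleGraph G where
  Adj x y := x ≠ y ∧ ∃ w : G, x ∈ Subgroup.zpowers w ∧ y ∈ Subgroup.zpowers w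
  symm := by
    constructor
    rintro x y ⟨hxy, w, hx, hy⟩
    exact ⟨hxy.symm, w, hy, hx⟩
  loopless := by
    constructor
    rintro x ⟨hxx, -⟩
    exact hxx rfl

/-- The set of dominating vertices of a graph: vertices adjacent to every other vertex. -/
def SimpleGraph.domVerts {V : Type*} (Γ : SimpleGraph V) : Set V :=
  {v | ∀ u, u ≠ v → Γ.Adj v u}

/-- The proper enhanced power graph: the enhanced power graph induced on the complement of
its set of dominating vertices. -/
def properEnhancedPowerGraph (G : Type*) [Group G] :
    SimpleGraph ((enhancedPowerGraph G).domVertsᶜ : Set G) :=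
  SimpleGraph.induce ((enhancedPowerGraph G).domVertsᶜ) (enhancedPowerGraph G)

/-- A total (strongly) dominating set: every vertex has a neighbor in `D`. -/
def SimpleGraph.IsTotalDominatingSet {V : Type*} (Γ : SimpleGraph V) (D : Set V) : Prop :=
  ∀ v : V, ∃ u ∈ D, Γ.Adj v u

/-- The strong domination number: minimum size of a total dominating set. -/
noncomputable def SimpleGraph.strongDominationNumber {V : Type*} (Γ : SimpleGraph V) : ℕ :=
  sInf {n : ℕ | ∃ D : Set V, Γ.IsTotalDominatingSet D ∧ D.ncard = n}

/-- A dominating set: every vertex not in `D` has a neighbor in `D`. -/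
def SimpleGraph.IsDominatingSet {V : Type*} (Γ : SimpleGraph V) (D : Set V) : Prop :=
  ∀ v ∉ D, ∃ u ∈ D, Γ.Adj v u

/-- The domination number: minimum size of a dominating set. -/
noncomputable def SimpleGraph.dominationNumber {V : Type*} (Γ : SimpleGraph V) : ℕ :=
  sInf {n : ℕ | ∃ D : Set V, Γ.IsDominatingSet D ∧ D.ncard = n}

/-- `G` is a generalized quaternion group `Q_{2^k}` for some `k ≥ 3`. -/
def IsGeneralizedQuaternion (G : Type*) [Group G] : Prop :=
  ∃ k : ℕ, 3 ≤ k ∧ Nonempty (G ≃* QuaternionGroup (2 ^ (k - 2)))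

/-- The number of subgroups of `G` of order `p`. -/
noncomputable def numSubgroupsOfOrder (G : Type*) [Group G] (p : ℕ) : ℕ :=
  Nat.card {H : Subgroup G // Nat.card H = p}

/-!
Write `m = 2 ^ (k - 2)`, so that `Q_{2^k}` is `QuaternionGroup m`, with centre `{1, a m}`. As `n` is
odd, a generator of `ℤ_n` can be paired with any `q ∈ Q` by the Chinese remainder theorem, so
`(c, q)` and `(c', q')` are adjacent iff they are distinct and `q, q'` lie in a common cyclic
subgroup of `Q`. Every nontrivial cyclic subgroup of the `2`-group `Q` contains its unique
involution `a m`, so the dominating vertices are those over the centre.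

Each noncentral element of `Q` lies in exactly one maximal cyclic subgroup: `⟨a 1⟩` or one of the
`m` subgroups `⟨xa j⟩`. Adjacent vertices of the proper graph lie over the same one, and a total
dominating set must meet each of these `m + 1` classes in a vertex and in a neighbour of it, giving
`2m + 2` as a lower bound. It is attained by `a 1`, `a (m + 1)` and the `2m` elements `xa i`.
-/

open Subgroup QuaternionGroup

namespace SimpleGraph

variable {V : Type*} {Γ : SimpleGraph V}

theorem strongDominationNumber_eq {D : Set V} {N : ℕ} (hD : Γ.IsTotalDominatingSet D)
    (hcard : D.ncard = N) (hmin : ∀ D', Γ.IsTotalDominatingSet D' → N ≤ D'.ncard) :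
    Γ.strongDominationNumber = N :=
  le_antisymm (Nat.sInf_le ⟨D, hD, hcard⟩)
    (le_csInf ⟨N, D, hD, hcard⟩ (by rintro _ ⟨D', hD', rfl⟩; exact hmin D' hD'))

theorem isTotalDominatingSet_induce_preimage {S T : Set V} (hTS : T ⊆ S)
    (h : ∀ v ∈ S, ∃ u ∈ T, Γ.Adj v u) :
    (Γ.induce S).IsTotalDominatingSet (Subtype.val ⁻¹' T) := fun v =>
  let ⟨u, huT, hvu⟩ := h v v.2
  ⟨⟨u, hTS huT⟩, huT, hvu⟩

/-- A vertex `v` in a fibre of `f` has a neighbour `w ∈ D`, and `w` has a neighbour in `D`; both lie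
in the fibre of `v`, so `D` meets every fibre twice. -/
theorem IsTotalDominatingSet.two_mul_card_le_ncard [Finite V] {ι : Type*} [Fintype ι]
    {f : V → ι} (hf : Function.Surjective f) (hadj : ∀ u v, Γ.Adj u v → f u = f v) {D : Set V}
    (hD : Γ.IsTotalDominatingSet D) : 2 * Fintype.card ι ≤ D.ncard := by
  classical
  have hfibre (t : ι) : 1 < {v ∈ D.toFinite.toFinset | f v = t}.card := by
    obtain ⟨v, rfl⟩ := hf t
    obtain ⟨w, hwD, hvw⟩ := hD v
    obtain ⟨w', hw'D, hww'⟩ := hD w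
    refine Finset.one_lt_card.mpr ⟨w, ?_, w', ?_, hww'.ne⟩ <;>
      simp [hwD, hw'D, hadj _ _ hvw, hadj _ _ hww']
  calc 2 * Fintype.card ι = ∑ _t : ι, 2 := by simp [mul_comm]
    _ ≤ ∑ t, {v ∈ D.toFinite.toFinset | f v = t}.card := Finset.sum_le_sum fun t _ => hfibre t
    _ = D.ncard := by
      rw [Set.ncard_eq_toFinset_card D, Finset.card_eq_sum_card_fiberwise (f := f) (t := .univ)
        fun _ _ => Finset.mem_univ _]

end SimpleGraph

section Prod

variable {A B : Type*} [Group A] [Group B]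

theorem mem_zpowers_snd {x w : A × B} (h : x ∈ zpowers w) : x.2 ∈ zpowers w.2 := by
  obtain ⟨t, rfl⟩ := h
  exact ⟨t, rfl⟩

theorem mk_mem_zpowers_mk [Finite A] [Finite B] {g c : A} {q r : B}
    (hco : (orderOf g).Coprime (orderOf q)) (hc : c ∈ zpowers g) (hr : r ∈ zpowers q) :
    (c, r) ∈ zpowers (g, q) := by
  rw [← mem_powers_iff_mem_zpowers] at hc hr ⊢
  obtain ⟨e₁, rfl⟩ := hc
  obtain ⟨e₂, rfl⟩ := hr
  obtain ⟨t, ht₁, ht₂⟩ := Nat.chineseRemainder hco e₁ e₂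
  exact ⟨t, Prod.ext (pow_eq_pow_iff_modEq.mpr ht₁) (pow_eq_pow_iff_modEq.mpr ht₂)⟩

variable [Finite A] [Finite B] [IsCyclic A]

theorem enhancedPowerGraph_prod_adj_iff (hAB : (Nat.card A).Coprime (Nat.card B)) {x y : A × B} :
    (enhancedPowerGraph (A × B)).Adj x y ↔ x ≠ y ∧ ∃ q : B, x.2 ∈ zpowers q ∧ y.2 ∈ zpowers q := by
  refine ⟨fun ⟨hxy, w, hx, hy⟩ => ⟨hxy, w.2, mem_zpowers_snd hx, mem_zpowers_snd hy⟩, ?_⟩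
  rintro ⟨hxy, q, hx, hy⟩
  obtain ⟨g, hg⟩ := IsCyclic.exists_generator (α := A)
  have hco : (orderOf g).Coprime (orderOf q) :=
    (hAB.coprime_dvd_left (orderOf_dvd_natCard g)).coprime_dvd_right (orderOf_dvd_natCard q)
  exact ⟨hxy, (g, q), mk_mem_zpowers_mk hco (hg _) hx, mk_mem_zpowers_mk hco (hg _) hy⟩

theorem domVerts_enhancedPowerGraph_prod (hAB : (Nat.card A).Coprime (Nat.card B)) :
    (enhancedPowerGraph (A × B)).domVerts = Prod.snd ⁻¹' (enhancedPowerGraph B).domVerts := by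
  ext v
  simp only [SimpleGraph.domVerts, Set.mem_ofPred_eq, Set.mem_preimage,
    enhancedPowerGraph_prod_adj_iff hAB]
  constructor
  · intro hv r hr
    obtain ⟨-, q, hq⟩ := hv (v.1, r) fun h => hr (congrArg Prod.snd h)
    exact ⟨hr.symm, q, hq⟩
  · intro hv u hu
    refine ⟨hu.symm, ?_⟩
    by_cases h : u.2 = v.2
    · exact ⟨v.2, mem_zpowers _, h ▸ mem_zpowers _⟩
    · exact (hv u.2 h).2

end Prod

theorem ZMod.natCast_ne_natCast_of_lt {N a b : ℕ} (ha : a < N) (hb : b < N) (hab : a ≠ b) :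
    (a : ZMod N) ≠ b := fun h => hab <| by
  simpa only [ZMod.val_natCast_of_lt ha, ZMod.val_natCast_of_lt hb] using congrArg ZMod.val h

namespace QuaternionGroup

variable {m : ℕ}

theorem xa_pow_three (j : ZMod (2 * m)) : xa j ^ 3 = xa (j + (m : ZMod (2 * m))) := by
  rw [pow_succ', xa_sq, xa_mul_a]

theorem a_natCast_ne_a_natCast {x y : ℕ} (hx : x < 2 * m) (hy : y < 2 * m) (hxy : x ≠ y) :
    a (x : ZMod (2 * m)) ≠ a y := fun h => ZMod.natCast_ne_natCast_of_lt hx hy hxy (a.inj h)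

theorem a_natCast_notMem {x : ℕ} (hx0 : x ≠ 0) (hxm : x ≠ m) (hx : x < 2 * m) :
    a (x : ZMod (2 * m)) ∉ ({1, a m} : Set (QuaternionGroup m)) := by
  rw [one_def, ← Nat.cast_zero]
  rintro (h | h)
  · exact a_natCast_ne_a_natCast hx (by omega) hx0 h
  · exact a_natCast_ne_a_natCast hx (by omega) hxm h

/-- Which maximal cyclic subgroup contains a noncentral element: `none` for `⟨a 1⟩`, `some j` for
`⟨xa j⟩ = {1, xa j, a m, xa (j + m)}`. -/
def cyclicComponent : QuaternionGroup m → Option (ZMod m)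
  | a _ => none
  | xa i => some (ZMod.castHom (dvd_mul_left m 2) (ZMod m) i)

theorem xa_notMem (i : ZMod (2 * m)) : xa i ∉ ({1, a m} : Set (QuaternionGroup m)) := by
  rw [one_def]
  simp [-a_zero]

theorem a_one_ne_a_natCast_add_one (h1m : 1 < m) :
    a 1 ≠ (a ((m + 1 : ℕ) : ZMod (2 * m)) : QuaternionGroup m) := by
  simpa using a_natCast_ne_a_natCast (m := m) (x := 1) (y := m + 1) (by omega) (by omega) (by omega)

variable [NeZero m]

theorem mem_zpowers_a_one (i : ZMod (2 * m)) : a i ∈ zpowers (a 1 : QuaternionGroup m) :=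
  ⟨i.val, by simp only [zpow_natCast, a_one_pow, ZMod.natCast_zmod_val]⟩

theorem exists_eq_a_of_mem_zpowers_a {q : QuaternionGroup m} {j : ZMod (2 * m)}
    (hq : q ∈ zpowers (a j)) : ∃ i, q = a i := by
  obtain ⟨t, rfl⟩ := mem_powers_iff_mem_zpowers.mpr (zpowers_le.mpr (mem_zpowers_a_one j) hq)
  exact ⟨t, a_one_pow t⟩

theorem mem_zpowers_xa {q : QuaternionGroup m} {j : ZMod (2 * m)} (hq : q ∈ zpowers (xa j)) :
    q = 1 ∨ q = a m ∨ q = xa j ∨ q = xa (j + (m : ZMod (2 * m))) := by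
  obtain ⟨t, rfl⟩ : ∃ t : ℕ, xa j ^ t = q := mem_powers_iff_mem_zpowers.mpr hq
  rw [← pow_mod_orderOf, orderOf_xa]
  have : t % 4 < 4 := Nat.mod_lt _ four_pos
  interval_cases t % 4
  · simp
  · simp
  · simp [xa_sq]
  · simp [xa_pow_three]

theorem eq_a_of_orderOf_eq_two {q : QuaternionGroup m} (hq : orderOf q = 2) : q = a m := by
  cases q with
  | xa i => simp [orderOf_xa] at hq
  | a i =>
    rw [orderOf_a] at hq
    have hg : Nat.gcd (2 * m) i.val = m := by
      have := Nat.div_mul_cancel (Nat.gcd_dvd_left (2 * m) i.val)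
      rw [hq] at this
      omega
    have hdvd := Nat.gcd_dvd_right (2 * m) i.val
    rw [hg] at hdvd
    obtain ⟨c, hc⟩ := hdvd
    have hc2 : c < 2 := by
      have := i.val_lt
      rw [hc] at this
      exact Nat.lt_of_mul_lt_mul_left (a := m) (by linarith)
    interval_cases c
    · simp only [hc, mul_zero, Nat.gcd_zero_right] at hg
      exact absurd (by omega : m = 0) (NeZero.ne m)
    · rw [← ZMod.natCast_zmod_val i, hc, mul_one]

theorem natCard_eq_two_pow {s : ℕ} (hm : m = 2 ^ s) :
    Nat.card (QuaternionGroup m) = 2 ^ (s + 2) := by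
  rw [Nat.card_eq_fintype_card, card, hm, pow_add]
  ring

theorem a_mem_zpowers {s : ℕ} (hm : m = 2 ^ s) {q : QuaternionGroup m} (hq : q ≠ 1) :
    a m ∈ zpowers q := by
  obtain ⟨t, -, ht⟩ := (Nat.dvd_prime_pow Nat.prime_two).mp (natCard_eq_two_pow hm ▸ orderOf_dvd_natCard q)
  have ht0 : t ≠ 0 := by
    rintro rfl
    exact hq (orderOf_eq_one_iff.mp ht)
  obtain ⟨x, hx⟩ := exists_prime_orderOf_dvd_card' (G := zpowers q) 2
    (by rw [Nat.card_zpowers, ht]; exact dvd_pow_self 2 ht0)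
  rw [← eq_a_of_orderOf_eq_two ((orderOf_coe x).trans hx)]
  exact x.2

theorem domVerts_enhancedPowerGraph {s : ℕ} (hm : m = 2 ^ s) (h1m : 1 < m) :
    (enhancedPowerGraph (QuaternionGroup m)).domVerts = {1, a m} := by
  ext q
  simp only [SimpleGraph.domVerts, Set.mem_ofPred_eq, Set.mem_insert_iff,
    Set.mem_singleton_iff]
  constructor
  · intro hq
    cases q with
    | a i =>
      obtain ⟨-, w, hi, h0⟩ := hq (xa 0) (by simp)
      cases w with
      | a j => simpa using exists_eq_a_of_mem_zpowers_a h0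
      | xa j => simpa using mem_zpowers_xa hi
    | xa i =>
      obtain ⟨-, w, hi, h1⟩ := hq (a 1) (by simp)
      cases w with
      | a j => simpa using exists_eq_a_of_mem_zpowers_a hi
      | xa j =>
        have h1 := mem_zpowers_xa h1
        have := a_natCast_notMem (m := m) (x := 1) one_ne_zero h1m.ne (by omega)
        simp_all
  · rintro (rfl | rfl) r hr
    · exact ⟨hr.symm, r, one_mem _, mem_zpowers r⟩
    · rcases eq_or_ne r 1 with rfl | hr1
      · exact ⟨hr.symm, a m, mem_zpowers _, one_mem _⟩
      · exact ⟨hr.symm, r, a_mem_zpowers hm hr1, mem_zpowers r⟩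

theorem cyclicComponent_eq_of_mem_zpowers {q w : QuaternionGroup m}
    (hq : q ∉ ({1, a m} : Set (QuaternionGroup m))) (hqw : q ∈ zpowers w) :
    cyclicComponent q = cyclicComponent w := by
  cases w with
  | a j =>
    obtain ⟨i, rfl⟩ := exists_eq_a_of_mem_zpowers_a hqw
    rfl
  | xa j =>
    rcases mem_zpowers_xa hqw with rfl | rfl | rfl | rfl
    · simp at hq
    · simp at hq
    · rfl
    · simp [cyclicComponent]

theorem xa_ne_xa_add (i : ZMod (2 * m)) : xa i ≠ xa (i + (m : ZMod (2 * m))) := fun h =>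
  have hm0 := NeZero.ne m
  ZMod.natCast_ne_natCast_of_lt (N := 2 * m) (by omega) (by omega) hm0
    (by simpa using (xa.inj h).symm)

def dominatingSet (m : ℕ) : Set (QuaternionGroup m) :=
  {a 1, a ((m + 1 : ℕ) : ZMod (2 * m))} ∪ Set.range xa

theorem ncard_dominatingSet (h1m : 1 < m) : (dominatingSet m).ncard = 2 * m + 2 := by
  rw [dominatingSet, Set.ncard_union_eq (by simp [Set.disjoint_left]), Set.ncard_pair,
    Set.ncard_range_of_injective fun _ _ => xa.inj, Nat.card_zmod]
  · ring
  · exact a_one_ne_a_natCast_add_one h1m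

end QuaternionGroup

section QuaternionProduct

variable {n m s : ℕ} [NeZero n] [NeZero m]

local notation "𝒢" => Multiplicative (ZMod n) × QuaternionGroup m

local notation "𝒮" => ((SimpleGraph.domVerts (enhancedPowerGraph 𝒢))ᶜ : Set 𝒢)

theorem card_zmod_coprime_card_quaternionGroup (hn : n.Coprime 2) (hm : m = 2 ^ s) :
    (Nat.card (Multiplicative (ZMod n))).Coprime (Nat.card (QuaternionGroup m)) := by
  rw [natCard_eq_two_pow hm]
  simpa using hn.pow_right (s + 2)

theorem mem_compl_domVerts_enhancedPowerGraph_zmod_prod_quaternionGroup (hn : n.Coprime 2)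
    (hm : m = 2 ^ s) (h1m : 1 < m) {v : 𝒢} :
    v ∈ 𝒮 ↔ v.2 ∉ ({1, a m} : Set (QuaternionGroup m)) := by
  rw [domVerts_enhancedPowerGraph_prod (card_zmod_coprime_card_quaternionGroup hn hm),
    domVerts_enhancedPowerGraph hm h1m]
  rfl

theorem image_prodMk_one_dominatingSet_subset (hn : n.Coprime 2) (hm : m = 2 ^ s)
    (h1m : 1 < m) : Prod.mk 1 '' dominatingSet m ⊆ 𝒮 := by
  have hmem (v : 𝒢) : v ∈ 𝒮 ↔ _ :=
    mem_compl_domVerts_enhancedPowerGraph_zmod_prod_quaternionGroup hn hm h1m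
  rintro _ ⟨q, (rfl | rfl) | ⟨i, rfl⟩, rfl⟩
  · exact (hmem _).mpr (by simpa using a_natCast_notMem (m := m) one_ne_zero h1m.ne (by omega))
  · exact (hmem _).mpr (a_natCast_notMem (by omega) (by omega) (by omega))
  · exact (hmem _).mpr (xa_notMem i)

theorem two_mul_add_two_le_ncard_of_isTotalDominatingSet (hn : n.Coprime 2) (hm : m = 2 ^ s)
    (h1m : 1 < m) {D : Set 𝒮} (hD : (properEnhancedPowerGraph 𝒢).IsTotalDominatingSet D) :
    2 * m + 2 ≤ D.ncard := by
  have hS (v : 𝒮) :=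
    (mem_compl_domVerts_enhancedPowerGraph_zmod_prod_quaternionGroup hn hm h1m).mp v.2
  have hT := image_prodMk_one_dominatingSet_subset hn hm h1m
  have hsurj : Function.Surjective fun v : 𝒮 => cyclicComponent v.1.2 := by
    rintro (_ | j)
    · exact ⟨⟨(1, a 1), hT ⟨a 1, by simp [dominatingSet], rfl⟩⟩, rfl⟩
    · exact ⟨⟨(1, xa (j.val : ZMod (2 * m))), hT ⟨_, by simp [dominatingSet], rfl⟩⟩,
        by simp [cyclicComponent]⟩
  have hadj (u v : 𝒮) (huv : (properEnhancedPowerGraph 𝒢).Adj u v) :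
      cyclicComponent u.1.2 = cyclicComponent v.1.2 := by
    obtain ⟨-, w, hu, hv⟩ := huv
    rw [cyclicComponent_eq_of_mem_zpowers (hS u) (mem_zpowers_snd hu),
      cyclicComponent_eq_of_mem_zpowers (hS v) (mem_zpowers_snd hv)]
  have := hD.two_mul_card_le_ncard hsurj hadj
  rw [Fintype.card_option, ZMod.card] at this
  omega

theorem isTotalDominatingSet_properEnhancedPowerGraph_dominatingSet (hn : n.Coprime 2)
    (hm : m = 2 ^ s) (h1m : 1 < m) :
    (properEnhancedPowerGraph 𝒢).IsTotalDominatingSet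
      (Subtype.val ⁻¹' (Prod.mk 1 '' dominatingSet m)) := by
  have hadj (x y : 𝒢) :=
    enhancedPowerGraph_prod_adj_iff (x := x) (y := y) (card_zmod_coprime_card_quaternionGroup hn hm)
  refine isTotalDominatingSet_induce_preimage
    (image_prodMk_one_dominatingSet_subset hn hm h1m) ?_
  rintro ⟨c, q⟩ -
  cases q with
  | a i =>
    by_cases hi : i = 1
    · refine ⟨(1, a ((m + 1 : ℕ) : ZMod (2 * m))), ⟨_, by simp [dominatingSet], rfl⟩,
        (hadj _ _).mpr ⟨?_, a 1, mem_zpowers_a_one i, mem_zpowers_a_one _⟩⟩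
      exact fun h => a_one_ne_a_natCast_add_one h1m (hi ▸ congrArg Prod.snd h)
    · refine ⟨(1, a 1), ⟨_, by simp [dominatingSet], rfl⟩, (hadj _ _).mpr
        ⟨fun h => hi (a.inj (congrArg Prod.snd h)), a 1, mem_zpowers_a_one i, mem_zpowers _⟩⟩
  | xa i =>
    refine ⟨(1, xa (i + (m : ZMod (2 * m)))), ⟨_, by simp [dominatingSet], rfl⟩, (hadj _ _).mpr
      ⟨fun h => xa_ne_xa_add i (congrArg Prod.snd h), xa i, mem_zpowers _, ?_⟩⟩
    exact mem_powers_iff_mem_zpowers.mp ⟨3, xa_pow_three i⟩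

theorem strongDominationNumber_properEnhancedPowerGraph_zmod_prod_quaternionGroup
    (hn : n.Coprime 2) (hm : m = 2 ^ s) (h1m : 1 < m) :
    (properEnhancedPowerGraph 𝒢).strongDominationNumber = 2 * m + 2 := by
  refine strongDominationNumber_eq
    (isTotalDominatingSet_properEnhancedPowerGraph_dominatingSet hn hm h1m) ?_
    fun D hD => two_mul_add_two_le_ncard_of_isTotalDominatingSet hn hm h1m hD
  rw [Set.ncard_preimage_of_injective_subset_range Subtype.val_injective
      (Subtype.range_coe ▸ image_prodMk_one_dominatingSet_subset hn hm h1m),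
    Set.ncard_image_of_injective _ (Prod.mk_right_injective 1), ncard_dominatingSet h1m]

end QuaternionProduct

/-- For `k ≥ 3` and `n` with `gcd(n, 2) = 1`,
`γ^strong(G_E**(ℤ_n × Q_{2^k})) = 2^{k-1} + 2`. -/
theorem stmt_5 (k : ℕ) (hk : 3 ≤ k) (n : ℕ) [NeZero n] (hn : Nat.Coprime n 2) :
    (properEnhancedPowerGraph
        (Multiplicative (ZMod n) × QuaternionGroup (2 ^ (k - 2)))).strongDominationNumber =
      2 ^ (k - 1) + 2 := by
  rw [strongDominationNumber_properEnhancedPowerGraph_zmod_prod_quaternionGroup hn rfl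
    (Nat.one_lt_two_pow (by omega)), ← pow_succ']
  congr 2
  omega
end

section
/- For k ≥ 3, the domination number of the proper enhanced power graph of the generalized quaternion group Q_{2^k} satisfies γ(G_E**(Q_{2^k})) = 2^{k-2} + 1. -/
open SimpleGraph

/-! The maximal cyclic subgroups of `Q_{4n}` are `⟨a⟩` and the `n` subgroups
`⟨x aᶜ⟩ = {1, aⁿ, x aᶜ, x aᶜ⁺ⁿ}`; any two of them meet exactly in the centre `{1, aⁿ}`, which is
therefore the set of dominating vertices of the enhanced power graph. The closed neighbourhood of
a generator of a maximal cyclic subgroup is that subgroup, so once the centre is removed the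
`n + 1` generators have pairwise disjoint closed neighbourhoods covering every vertex: they form a
dominating set, and any dominating set must meet each of these `n + 1` neighbourhoods. -/

namespace SimpleGraph

variable {V : Type*} (Γ : SimpleGraph V)

def closedNeighborSet (v : V) : Set V := insert v (Γ.neighborSet v)

variable {Γ}

@[simp]
theorem mem_closedNeighborSet {u v : V} : u ∈ Γ.closedNeighborSet v ↔ u = v ∨ Γ.Adj v u :=
  Iff.rfl

theorem self_mem_closedNeighborSet (v : V) : v ∈ Γ.closedNeighborSet v := Or.inl rfl

theorem mem_closedNeighborSet_induce {s : Set V} {u v : s} :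
    u ∈ (Γ.induce s).closedNeighborSet v ↔ (u : V) ∈ Γ.closedNeighborSet v := by
  simp [Subtype.ext_iff]

theorem dominationNumber_le_ncard {D : Set V} (hD : Γ.IsDominatingSet D) :
    Γ.dominationNumber ≤ D.ncard :=
  Nat.sInf_le ⟨D, hD, rfl⟩

theorem le_dominationNumber {m : ℕ} (h : ∀ D, Γ.IsDominatingSet D → m ≤ D.ncard) :
    m ≤ Γ.dominationNumber :=
  le_csInf ⟨_, Set.univ, fun v hv => absurd (Set.mem_univ v) hv, rfl⟩ <| by
    rintro _ ⟨D, hD, rfl⟩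
    exact h D hD

theorem IsDominatingSet.exists_mem_closedNeighborSet {D : Set V} (hD : Γ.IsDominatingSet D)
    (v : V) : ∃ u ∈ D, u ∈ Γ.closedNeighborSet v := by
  by_cases hv : v ∈ D
  · exact ⟨v, hv, self_mem_closedNeighborSet v⟩
  · obtain ⟨u, huD, hvu⟩ := hD v hv
    exact ⟨u, huD, Or.inr hvu⟩

/-- Every dominating set meets each of the disjoint closed neighbourhoods. -/
theorem dominationNumber_eq_of_pairwise_disjoint_closedNeighborSet [Finite V] {ι : Type*}
    (v : ι → V)
    (hdisj : Pairwise fun i j => Disjoint (Γ.closedNeighborSet (v i)) (Γ.closedNeighborSet (v j)))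
    (hcover : ∀ u, ∃ i, u ∈ Γ.closedNeighborSet (v i)) :
    Γ.dominationNumber = Nat.card ι := by
  have hv : Function.Injective v := fun i j hij => by
    by_contra hne
    exact Set.disjoint_left.mp (hdisj hne) (self_mem_closedNeighborSet (v i))
      (hij ▸ self_mem_closedNeighborSet (Γ := Γ) (v j))
  have hrange : Γ.IsDominatingSet (Set.range v) := by
    intro u hu
    obtain ⟨i, rfl | hadj⟩ := hcover u
    · exact absurd (Set.mem_range_self i) hu
    · exact ⟨v i, Set.mem_range_self i, hadj.symm⟩
  refine le_antisymm ?_ (le_dominationNumber fun D hD => ?_)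
  · simpa [Set.ncard_range_of_injective hv] using dominationNumber_le_ncard hrange
  · choose f hfD hf using fun i => hD.exists_mem_closedNeighborSet (v i)
    have hf_inj : Function.Injective fun i => (⟨f i, hfD i⟩ : D) := fun i j hij => by
      have hfij : f i = f j := congrArg Subtype.val hij
      by_contra hne
      exact Set.disjoint_left.mp (hdisj hne) (hf i) (hfij ▸ hf j)
    simpa using Nat.card_le_card_of_injective _ hf_inj

end SimpleGraph

open Subgroup

section EnhancedPowerGraph

variable {G : Type*} [Group G]

theorem closedNeighborSet_enhancedPowerGraph {g : G}
    (hg : ∀ w, g ∈ zpowers w → zpowers w = zpowers g) :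
    (enhancedPowerGraph G).closedNeighborSet g = zpowers g := by
  ext u
  constructor
  · rintro (rfl | ⟨-, w, hgw, huw⟩)
    · exact mem_zpowers u
    · exact hg w hgw ▸ huw
  · intro hu
    by_cases h : u = g
    · exact Or.inl h
    · exact Or.inr ⟨Ne.symm h, g, mem_zpowers g, hu⟩

theorem domVerts_enhancedPowerGraph {ι : Type*} (g : ι → G)
    (hmax : ∀ i w, g i ∈ zpowers w → zpowers w = zpowers (g i))
    (hcover : ∀ x, ∃ i, x ∈ zpowers (g i)) :
    (enhancedPowerGraph G).domVerts = ⋂ i, (zpowers (g i) : Set G) := by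
  ext v
  simp only [Set.mem_iInter]
  constructor
  · intro hv i
    rw [SetLike.mem_coe, ← SetLike.mem_coe, ← closedNeighborSet_enhancedPowerGraph (hmax i)]
    by_cases h : v = g i
    · exact Or.inl h
    · exact Or.inr (hv (g i) (Ne.symm h)).symm
  · intro hv u hu
    obtain ⟨i, hi⟩ := hcover u
    exact ⟨Ne.symm hu, g i, hv i, hi⟩

theorem dominationNumber_properEnhancedPowerGraph [Finite G] {ι : Type*} (g : ι → G)
    (hmax : ∀ i w, g i ∈ zpowers w → zpowers w = zpowers (g i))
    (hcover : ∀ x, ∃ i, x ∈ zpowers (g i))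
    (hinter : Pairwise fun i j =>
      (zpowers (g i) : Set G) ∩ zpowers (g j) ⊆ ⋂ k, (zpowers (g k) : Set G))
    (hproper : ∀ i, ∃ j, g i ∉ zpowers (g j)) :
    (properEnhancedPowerGraph G).dominationNumber = Nat.card ι := by
  have hdom := domVerts_enhancedPowerGraph g hmax hcover
  have hg : ∀ i, g i ∈ (enhancedPowerGraph G).domVertsᶜ := fun i => by
    simpa [hdom] using hproper i
  have hN : ∀ i (u : ((enhancedPowerGraph G).domVertsᶜ : Set G)),
      u ∈ (properEnhancedPowerGraph G).closedNeighborSet ⟨g i, hg i⟩ ↔ (u : G) ∈ zpowers (g i) :=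
    fun i u => by
      rw [properEnhancedPowerGraph, mem_closedNeighborSet_induce,
        closedNeighborSet_enhancedPowerGraph (hmax i)]
      rfl
  refine dominationNumber_eq_of_pairwise_disjoint_closedNeighborSet (fun i => ⟨g i, hg i⟩)
    (fun i j hij => Set.disjoint_left.mpr fun u hi hj => ?_) (fun u => ?_)
  · have hu := hinter hij ⟨(hN i u).mp hi, (hN j u).mp hj⟩
    rw [← hdom] at hu
    exact u.2 hu
  · obtain ⟨i, hi⟩ := hcover u
    exact ⟨i, (hN i u).mpr hi⟩

end EnhancedPowerGraph

namespace QuaternionGroup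

variable {n : ℕ}

theorem a_zpow (i : ZMod (2 * n)) (t : ℤ) :
    (a i : QuaternionGroup n) ^ t = a ((t : ZMod (2 * n)) * i) := by
  induction t using Int.induction_on with
  | zero => simp
  | succ t ih => rw [zpow_add_one, ih, a_mul_a]; push_cast; ring_nf
  | pred t ih =>
    rw [zpow_sub_one, ih, show (a i)⁻¹ = a (-i) from rfl, a_mul_a]; push_cast; ring_nf

theorem a_mem_zpowers_a_one (i : ZMod (2 * n)) : (a i : QuaternionGroup n) ∈ zpowers (a 1) :=
  mem_zpowers_iff.mpr ⟨ZMod.cast i, by rw [a_zpow, mul_one, ZMod.intCast_zmod_cast]⟩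

theorem xa_notMem_zpowers_a (i j : ZMod (2 * n)) :
    (xa i : QuaternionGroup n) ∉ zpowers (a j) := by
  rw [mem_zpowers_iff]
  rintro ⟨t, ht⟩
  rw [a_zpow] at ht
  cases ht

theorem mem_zpowers_xa_iff {g : QuaternionGroup n} {j : ZMod (2 * n)} :
    g ∈ zpowers (xa j) ↔
      g = a 0 ∨ g = a (n : ZMod (2 * n)) ∨ g = xa j ∨ g = xa (j + (n : ZMod (2 * n))) := by
  have h3 : xa j ^ 3 = xa (j + (n : ZMod (2 * n))) := by rw [pow_succ', xa_sq, xa_mul_a]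
  rw [mem_zpowers_iff]
  constructor
  · rintro ⟨t, rfl⟩
    obtain ⟨k, hk, hkt⟩ : ∃ k : ℕ, k < 4 ∧ t % 4 = k := ⟨(t % 4).toNat, by omega, by omega⟩
    rw [zpow_eq_zpow_emod' t (xa_pow_four j), Nat.cast_ofNat, hkt, zpow_natCast]
    interval_cases k
    · simp
    · simp
    · simp [xa_sq]
    · simp [h3]
  · rintro (rfl | rfl | rfl | rfl)
    exacts [⟨0, by simp⟩, ⟨2, by simp [xa_sq]⟩, ⟨1, by simp⟩, ⟨3, by simp [h3]⟩]

theorem a_mem_zpowers_xa_iff {i j : ZMod (2 * n)} :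
    (a i : QuaternionGroup n) ∈ zpowers (xa j) ↔ i = 0 ∨ i = n := by
  simp only [mem_zpowers_xa_iff, a.injEq, reduceCtorEq, or_false]

theorem xa_mem_zpowers_xa_iff [NeZero n] {p q : ZMod (2 * n)} :
    (xa p : QuaternionGroup n) ∈ zpowers (xa q) ↔ (ZMod.cast p : ZMod n) = ZMod.cast q := by
  have hdvd : n ∣ 2 * n := dvd_mul_left n 2
  simp only [mem_zpowers_xa_iff, reduceCtorEq, false_or, xa.injEq]
  constructor
  · rintro (rfl | rfl)
    · rfl
    · rw [ZMod.cast_add hdvd, ZMod.cast_natCast hdvd, ZMod.natCast_self, add_zero]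
  · intro h
    -- `p - q` vanishes in `ZMod n`, so its value in `[0, 2n)` is `0` or `n`.
    have hval : (p - q).val = 0 ∨ (p - q).val = n := by
      obtain ⟨m, hm⟩ : n ∣ (p - q).val := by
        rw [← ZMod.natCast_eq_zero_iff, ← ZMod.cast_eq_val, ZMod.cast_sub hdvd, h, sub_self]
      have hlt := ZMod.val_lt (p - q)
      have hm2 : m < 2 := by by_contra; nlinarith
      interval_cases m <;> simp [hm]
    rcases hval with h0 | hn
    · exact Or.inl (sub_eq_zero.mp ((ZMod.val_eq_zero _).mp h0))
    · exact Or.inr (eq_add_of_sub_eq' (by rw [← ZMod.natCast_zmod_val (p - q), hn]))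

theorem a_one_notMem_zpowers_xa (hn : 1 < n) (j : ZMod (2 * n)) :
    (a 1 : QuaternionGroup n) ∉ zpowers (xa j) := by
  rw [a_mem_zpowers_xa_iff, ← Nat.cast_one, ← Nat.cast_zero (R := ZMod (2 * n)),
    ZMod.natCast_eq_natCast_iff', ZMod.natCast_eq_natCast_iff',
    Nat.mod_eq_of_lt (by omega : 1 < 2 * n), Nat.mod_eq_of_lt (by omega : n < 2 * n), Nat.zero_mod]
  omega

theorem zpowers_eq_zpowers_a_one (hn : 1 < n) {w : QuaternionGroup n} (h : a 1 ∈ zpowers w) :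
    zpowers w = zpowers (a 1) := by
  cases w with
  | a t => exact le_antisymm (zpowers_le.mpr (a_mem_zpowers_a_one t)) (zpowers_le.mpr h)
  | xa t => exact absurd h (a_one_notMem_zpowers_xa hn t)

theorem zpowers_eq_zpowers_xa {w : QuaternionGroup n} {j : ZMod (2 * n)}
    (h : xa j ∈ zpowers w) : zpowers w = zpowers (xa j) := by
  cases w with
  | a t => exact absurd h (xa_notMem_zpowers_a j t)
  | xa t =>
    rcases mem_zpowers_xa_iff.mp h with h | h | h | h <;> cases h
    · rfl
    · rw [show xa (t + (n : ZMod (2 * n))) = (xa t)⁻¹ from congrArg xa (add_comm _ _),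
        zpowers_inv]

/-- `a 1` and `xa c` for `c : ZMod n` generate the maximal cyclic subgroups of `Q_{4n}`;
`xa c` and `xa (c + n)` generate the same one. -/
def maxCyclicGenerator : Option (ZMod n) → QuaternionGroup n
  | none => a 1
  | some c => xa (ZMod.cast c)

theorem zpowers_eq_zpowers_maxCyclicGenerator (hn : 1 < n) (o : Option (ZMod n))
    {w : QuaternionGroup n} (h : maxCyclicGenerator o ∈ zpowers w) :
    zpowers w = zpowers (maxCyclicGenerator o) := by
  cases o with
  | none => exact zpowers_eq_zpowers_a_one hn h
  | some c => exact zpowers_eq_zpowers_xa h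

theorem exists_mem_zpowers_maxCyclicGenerator [NeZero n] (g : QuaternionGroup n) :
    ∃ o, g ∈ zpowers (maxCyclicGenerator o) := by
  cases g with
  | a i => exact ⟨none, a_mem_zpowers_a_one i⟩
  | xa j =>
    exact ⟨some (ZMod.cast j), xa_mem_zpowers_xa_iff.mpr
      (ZMod.cast_cast_zmod_of_le (by omega) _).symm⟩

theorem center_subset_zpowers_maxCyclicGenerator (o : Option (ZMod n)) :
    {a 0, a n} ⊆ (zpowers (maxCyclicGenerator o) : Set (QuaternionGroup n)) := by
  rintro g (rfl | rfl)
  · exact one_mem _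
  · cases o with
    | none => exact a_mem_zpowers_a_one _
    | some c => exact a_mem_zpowers_xa_iff.mpr (Or.inr rfl)

theorem zpowers_maxCyclicGenerator_inter_subset [NeZero n] {o o' : Option (ZMod n)}
    (h : o ≠ o') :
    (zpowers (maxCyclicGenerator o) : Set (QuaternionGroup n)) ∩ zpowers (maxCyclicGenerator o')
      ⊆ {a 0, a n} := by
  rintro (i | j) ⟨h₁, h₂⟩
  · have hi : i = 0 ∨ i = n := by
      rcases o with _ | c
      · rcases o' with _ | c'
        · exact absurd rfl h
        · exact a_mem_zpowers_xa_iff.mp h₂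
      · exact a_mem_zpowers_xa_iff.mp h₁
    rcases hi with rfl | rfl
    exacts [Or.inl rfl, Or.inr rfl]
  · rcases o with _ | c
    · exact absurd h₁ (xa_notMem_zpowers_a j 1)
    rcases o' with _ | c'
    · exact absurd h₂ (xa_notMem_zpowers_a j 1)
    simp only [maxCyclicGenerator, SetLike.mem_coe, xa_mem_zpowers_xa_iff,
      ZMod.cast_cast_zmod_of_le (by omega : n ≤ 2 * n)] at h₁ h₂
    exact absurd (congrArg some (h₁.symm.trans h₂)) h

theorem dominationNumber_properEnhancedPowerGraph_quaternionGroup (hn : 1 < n) :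
    (properEnhancedPowerGraph (QuaternionGroup n)).dominationNumber = n + 1 := by
  have : NeZero n := ⟨by omega⟩
  rw [dominationNumber_properEnhancedPowerGraph maxCyclicGenerator
    (fun o _ => zpowers_eq_zpowers_maxCyclicGenerator hn o)
    exists_mem_zpowers_maxCyclicGenerator
    (fun o o' h => (zpowers_maxCyclicGenerator_inter_subset h).trans
      (Set.subset_iInter center_subset_zpowers_maxCyclicGenerator))
    (fun o => ?_), Finite.card_option, Nat.card_zmod]
  cases o with
  | none => exact ⟨some 0, a_one_notMem_zpowers_xa hn _⟩
  | some c => exact ⟨none, xa_notMem_zpowers_a _ 1⟩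

end QuaternionGroup

/-- For `k ≥ 3`, `γ(G_E**(Q_{2^k})) = 2^{k-2} + 1`. -/
theorem stmt_8 (k : ℕ) (hk : 3 ≤ k) :
    (properEnhancedPowerGraph (QuaternionGroup (2 ^ (k - 2)))).dominationNumber =
      2 ^ (k - 2) + 1 :=
  QuaternionGroup.dominationNumber_properEnhancedPowerGraph_quaternionGroup
    (Nat.one_lt_two_pow (by omega))
end
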